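/- arXiv:2305.15409 — 3 statements merged into one kernel-verified Lean document; each statement's English description precedes it below -/
import Mathlib

section
/- Let A be a commutative ring, P = A[x_1,...,x_n], I = (f_1,...,f_m) ⊆ P, and suppose σ : P → P is an A-algebra homomorphism with σ(x_i) ≡ x_i mod I for all i and σ(f_j) ∈ I² for all j. Then σ descends to an A-algebra homomorphism s : P/I → P/I² which is a section of the quotient map P/I² → P/I. -/
open MvPolynomial

theorem MvPolynomial.sub_mem_of_forall_sub_X_mem {ι R S : Type*} [CommSemiring R] [CommRing S]
    [Algebra R S] (J : Ideal S) (φ ψ : MvPolynomial ι R →ₐ[R] S)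
    (h : ∀ i, φ (X i) - ψ (X i) ∈ J) (p : MvPolynomial ι R) : φ p - ψ p ∈ J := by
  have hcomp : (Ideal.Quotient.mkₐ R J).comp φ = (Ideal.Quotient.mkₐ R J).comp ψ :=
    MvPolynomial.algHom_ext fun i => Ideal.Quotient.eq.mpr (h i)
  exact Ideal.Quotient.eq.mp (AlgHom.congr_fun hcomp p)

theorem Ideal.exists_quotient_section_of_map_le_sq {R S : Type*} [CommSemiring R] [CommRing S]
    [Algebra R S] (I : Ideal S) (σ : S →ₐ[R] S) (hσI : I ≤ (I ^ 2).comap σ)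
    (hσ : ∀ p, σ p - p ∈ I) :
    ∃ s : (S ⧸ I) →ₐ[R] (S ⧸ I ^ 2),
      (∀ p, s (Ideal.Quotient.mk I p) = Ideal.Quotient.mk (I ^ 2) (σ p)) ∧
      ∀ b, Ideal.Quotient.liftₐ (I ^ 2) (Ideal.Quotient.mkₐ R I)
        (fun _ ha => Ideal.Quotient.eq_zero_iff_mem.2
          (Ideal.pow_le_self two_ne_zero ha)) (s b) = b := by
  refine ⟨Ideal.Quotient.liftₐ I ((Ideal.Quotient.mkₐ R (I ^ 2)).comp σ)
    (fun _ ha => Ideal.Quotient.eq_zero_iff_mem.2 (hσI ha)), fun p => rfl, ?_⟩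
  rintro ⟨p⟩
  exact Ideal.Quotient.eq.mpr (hσ p)

theorem stmt_2 {A : Type*} [CommRing A] (n m : ℕ)
    (f : Fin m → MvPolynomial (Fin n) A)
    (I : Ideal (MvPolynomial (Fin n) A)) (hI : I = Ideal.span (Set.range f))
    (σ : MvPolynomial (Fin n) A →ₐ[A] MvPolynomial (Fin n) A)
    (hx : ∀ i, σ (X i) - X i ∈ I)
    (hf : ∀ j, σ (f j) ∈ I ^ 2) :
    ∃ s : (MvPolynomial (Fin n) A ⧸ I) →ₐ[A] (MvPolynomial (Fin n) A ⧸ I ^ 2),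
      (∀ p, s (Ideal.Quotient.mk I p) = Ideal.Quotient.mk (I ^ 2) (σ p)) ∧
      ∀ b, Ideal.Quotient.liftₐ (I ^ 2) (Ideal.Quotient.mkₐ A I)
        (fun a ha => Ideal.Quotient.eq_zero_iff_mem.2
          (Ideal.pow_le_self two_ne_zero ha)) (s b) = b := by
  have hσI : I ≤ (I ^ 2).comap σ := by
    conv_lhs => rw [hI]
    exact Ideal.span_le.mpr (Set.range_subset_iff.mpr hf)
  exact I.exists_quotient_section_of_map_le_sq σ hσI
    (MvPolynomial.sub_mem_of_forall_sub_X_mem I σ (AlgHom.id A _) hx)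
end

section
/- Every smooth (i.e., formally smooth and finitely presented) ring homomorphism A → B is obtained by base change from a smooth homomorphism A₀ → B₀ where A₀ and B₀ are finite-type ℤ-algebras (in particular noetherian): there is a ring map A₀ → A with A ⊗_{A₀} B₀ ≅ B as A-algebras. -/
/-!
Noetherian descent for smooth algebras (`Algebra.Smooth.exists_finiteType`) writes `B` as
`A ⊗[A₀] B₀` with `A₀` a finite-type `ℤ`-algebra and `B₀` smooth over `A₀`, but with `A₀` and `B₀`
living in the universe of `A`. Since `ℤ` is small, so is every finite-type `ℤ`-algebra, and in turn
every finite-type algebra over it; shrinking `A₀` and `B₀` to `Type` and changing the base along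
the isomorphism `Shrink A₀ ≃+* A₀` keeps smoothness and the tensor product.
-/

universe u w

open TensorProduct

theorem TensorProduct.CompatibleSMul.of_surjective_algebraMap {R S M N : Type*}
    [CommSemiring R] [CommSemiring S] [Algebra R S] [AddCommMonoid M] [AddCommMonoid N]
    [Module R M] [Module R N] [Module S M] [Module S N] [IsScalarTower R S M]
    [IsScalarTower R S N] (h : Function.Surjective (algebraMap R S)) :
    CompatibleSMul R S M N where
  smul_tmul s m n := by
    obtain ⟨r, rfl⟩ := h s
    simp only [algebraMap_smul, smul_tmul]

theorem Algebra.Smooth.exists_model_of_small {A B A₀ B₀ : Type*} [CommRing A] [CommRing B]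
    [Algebra A B] [CommRing A₀] [CommRing B₀] [Algebra A₀ A] [Algebra A₀ B₀]
    [Small.{w} A₀] [Small.{w} B₀] [Algebra.Smooth A₀ B₀] (e : B ≃ₐ[A] A ⊗[A₀] B₀) :
    ∃ (A₁ B₁ : Type w) (_ : CommRing A₁) (_ : CommRing B₁) (_ : Algebra A₁ B₁)
      (_ : Algebra A₁ A), Nonempty (A₁ ≃+* A₀) ∧ Algebra.Smooth A₁ B₁ ∧
      Nonempty ((A ⊗[A₁] B₁) ≃ₐ[A] B) := by
  let A₁ := Shrink.{w} A₀
  let _ : Algebra A₁ A₀ := (Shrink.ringEquiv A₀).toRingHom.toAlgebra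
  let _ : Algebra A₁ A := ((algebraMap A₀ A).comp (algebraMap A₁ A₀)).toAlgebra
  let _ : Algebra A₁ B₀ := ((algebraMap A₀ B₀).comp (algebraMap A₁ A₀)).toAlgebra
  have : IsScalarTower A₁ A₀ A := .of_algebraMap_eq' rfl
  have : IsScalarTower A₁ A₀ B₀ := .of_algebraMap_eq' rfl
  have : CompatibleSMul A₁ A₀ A B₀ := .of_surjective_algebraMap (Shrink.ringEquiv A₀).surjective
  have : Algebra.Smooth A₁ A₀ :=
    .of_equiv (AlgEquiv.ofBijective (Algebra.ofId A₁ A₀) (Shrink.ringEquiv A₀).bijective)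
  have : Algebra.Smooth A₁ B₀ := .comp A₁ A₀ B₀
  refine ⟨A₁, Shrink.{w} B₀, inferInstance, inferInstance, inferInstance, inferInstance,
    ⟨Shrink.ringEquiv A₀⟩, .of_equiv (Shrink.algEquiv A₁ B₀).symm, ⟨?_⟩⟩
  exact (Algebra.TensorProduct.congr .refl (Shrink.algEquiv A₁ B₀)).trans
    ((Algebra.TensorProduct.equivOfCompatibleSMul A₀ A₁ A A B₀).trans e.symm)

theorem stmt_5 {A B : Type u} [CommRing A] [CommRing B] [Algebra A B]
    [Algebra.FormallySmooth A B] [Algebra.FinitePresentation A B] :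
    ∃ (A₀ B₀ : Type) (_ : CommRing A₀) (_ : CommRing B₀) (_ : Algebra A₀ B₀)
      (_ : Algebra A₀ A),
      Algebra.FiniteType ℤ A₀ ∧ Algebra.FiniteType ℤ B₀ ∧
      Algebra.FormallySmooth A₀ B₀ ∧ Algebra.FinitePresentation A₀ B₀ ∧
      Nonempty ((A ⊗[A₀] B₀) ≃ₐ[A] B) := by
  have : Algebra.Smooth A B := {}
  obtain ⟨A₀, B₀, _, _, _, _, _, -, hA₀, _, ⟨e⟩⟩ := Algebra.Smooth.exists_finiteType ℤ A B
  obtain rfl : ‹Algebra ℤ A₀› = Ring.toIntAlgebra A₀ := Subsingleton.elim _ _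
  have : Small.{0} A₀ := Algebra.FiniteType.small (R := ℤ)
  have : Small.{0} B₀ := Algebra.FiniteType.small (R := A₀)
  obtain ⟨A₁, B₁, _, _, _, _, ⟨f⟩, _, he⟩ := Algebra.Smooth.exists_model_of_small.{0} e
  have hA₁ : Algebra.FiniteType ℤ A₁ := hA₀.equiv f.symm.toIntAlgEquiv
  exact ⟨A₁, B₁, _, _, _, _, hA₁, hA₁.trans inferInstance, inferInstance, inferInstance, he⟩
end

section
/- Let A be a commutative ring and B = A[x_1,...,x_n]/(f_1,...,f_m). Suppose there exist g_i = Σ_j u_{ij} f_j with u_{ij} ∈ A[x] and h_{jkℓ} ∈ A[x] such that f_j(x_1+g_1,...,x_n+g_n) = Σ_{k,ℓ} h_{jkℓ} f_k f_ℓ for all j. Then B is formally smooth over A. -/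
/-!
Let `I = (f_1, …, f_m)` and let `σ` be the substitution `x_i ↦ x_i + g_i`. Since each `g_i ∈ I`,
`σ` induces the identity on `P ⧸ I`, and the hypothesis says `σ(I) ⊆ I²`. Hence `σ` descends to
an algebra map `P ⧸ I → P ⧸ I²` splitting the projection `P ⧸ I² → P ⧸ I`, and a quotient of the
formally smooth algebra `P` whose square-zero extension `P ⧸ I² → P ⧸ I` splits is formally smooth.
-/

open MvPolynomial

namespace Algebra.FormallySmooth

theorem quotient_of_map_le_sq {A P : Type*} [CommRing A] [CommRing P] [Algebra A P]
    [FormallySmooth A P] (I : Ideal P) (σ : P →ₐ[A] P) (hσ : I.map σ ≤ I ^ 2)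
    (hσ_mod : (Ideal.Quotient.mkₐ A I).comp σ = Ideal.Quotient.mkₐ A I) :
    FormallySmooth A (P ⧸ I) := by
  let π := Ideal.Quotient.mkₐ A I
  have hker : RingHom.ker π.toRingHom = I := Ideal.mk_ker
  have hσ_sq : I ≤ RingHom.ker ((Ideal.Quotient.mkₐ A (RingHom.ker π.toRingHom ^ 2)).comp σ) := by
    intro p hp
    rw [RingHom.mem_ker, AlgHom.comp_apply, Ideal.Quotient.mkₐ_eq_mk,
      Ideal.Quotient.eq_zero_iff_mem, hker]
    exact hσ (Ideal.mem_map_of_mem σ hp)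
  exact of_split π (Ideal.Quotient.liftₐ I _ hσ_sq) (Ideal.Quotient.algHom_ext A hσ_mod)

end Algebra.FormallySmooth

theorem MvPolynomial.mkₐ_comp_aeval_X_add {ι R : Type*} [CommRing R]
    (I : Ideal (MvPolynomial ι R)) (g : ι → MvPolynomial ι R) (hg : ∀ i, g i ∈ I) :
    (Ideal.Quotient.mkₐ R I).comp (aeval fun i => X i + g i) = Ideal.Quotient.mkₐ R I := by
  ext i
  simp [Ideal.Quotient.eq_zero_iff_mem.mpr (hg i)]

theorem stmt_17 {A : Type*} [CommRing A] (n m : ℕ)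
    (f : Fin m → MvPolynomial (Fin n) A)
    (u : Fin n → Fin m → MvPolynomial (Fin n) A)
    (h : Fin m → Fin m → Fin m → MvPolynomial (Fin n) A)
    (key : ∀ j, (aeval (fun i => X i + ∑ j', u i j' * f j') :
        MvPolynomial (Fin n) A →ₐ[A] MvPolynomial (Fin n) A) (f j) =
      ∑ k, ∑ l, h j k l * f k * f l) :
    Algebra.FormallySmooth A
      (MvPolynomial (Fin n) A ⧸ Ideal.span (Set.range f)) := by
  set I := Ideal.span (Set.range f)
  have hf : ∀ j, f j ∈ I := fun j => Ideal.subset_span ⟨j, rfl⟩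
  have hg : ∀ i, ∑ j, u i j * f j ∈ I := fun i => Ideal.sum_mem _ fun j _ => I.mul_mem_left _ (hf j)
  refine Algebra.FormallySmooth.quotient_of_map_le_sq I _ ?_ (mkₐ_comp_aeval_X_add I _ hg)
  rw [Ideal.map_span, Ideal.span_le]
  rintro _ ⟨_, ⟨j, rfl⟩, rfl⟩
  rw [SetLike.mem_coe, key j]
  refine Ideal.sum_mem _ fun k _ => Ideal.sum_mem _ fun l _ => ?_
  rw [mul_assoc, pow_two]
  exact Ideal.mul_mem_left _ _ (Ideal.mul_mem_mul (hf k) (hf l))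
end
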